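/- arXiv:math/0109042 — 2 statements merged into one kernel-verified Lean document; each statement's English description precedes it below -/
import Mathlib

section
/- The set K = {[[u,0],[0,1]] : u ∈ ℂ, |u| = 1} is a compact subgroup of Aff(ℂ), and every compact subgroup of Aff(ℂ) is conjugate (by an element of Aff(ℂ)) to a subgroup of K; thus K, which is topologically isomorphic to the circle group S¹, is a maximal compact subgroup of Aff(ℂ). -/
/-!
Let `H` be a compact subgroup of `Aff(ℂ)`. Its elements `z ↦ a z + b` have bounded
coefficients, and so do all their powers `z ↦ aⁿ z + (1 + a + ⋯ + aⁿ⁻¹) b`. Hence `|a| ≤ 1`,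
so `|a| = 1` by applying this to the inverse as well, and a translation `z ↦ z + b` in `H`
is the identity. The homomorphism `M ↦ a` is therefore injective on `H`, so `H` is
commutative. The fixed point of an element of `H` that is not a translation is then fixed by
every element of `H`, and conjugating by the translation that moves it to `0` turns every
element of `H` into a rotation `z ↦ a z` with `|a| = 1`.
-/

/-- `Aff(ℂ)`: the group of affine transformations of the complex line,
realized as the matrices `[[a, b], [0, 1]]` with `a ≠ 0`. -/
def AffC : Set (Matrix (Fin 2) (Fin 2) ℂ) :=
  {M | ∃ a b : ℂ, a ≠ 0 ∧ M = !![a, b; 0, 1]}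

/-- The circle subgroup `K = {[[u,0],[0,1]] : |u| = 1}` of `Aff(ℂ)`. -/
def circleK : Set (Matrix (Fin 2) (Fin 2) ℂ) :=
  {M | ∃ u : ℂ, ‖u‖ = 1 ∧ M = !![u, 0; 0, 1]}

theorem norm_le_one_of_forall_norm_pow_le {𝕜 : Type*} [NormedDivisionRing 𝕜] {a : 𝕜} {C : ℝ}
    (h : ∀ n : ℕ, ‖a ^ n‖ ≤ C) : ‖a‖ ≤ 1 := by
  by_contra! ha
  obtain ⟨n, hn⟩ := pow_unbounded_of_one_lt C ha
  exact (h n).not_gt (by rwa [norm_pow])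

theorem eq_zero_of_forall_norm_nsmul_le {E : Type*} [NormedAddCommGroup E] [NormedSpace ℝ E]
    {b : E} {C : ℝ} (h : ∀ n : ℕ, ‖n • b‖ ≤ C) : b = 0 := by
  by_contra hb
  obtain ⟨n, hn⟩ := exists_nat_gt (C / ‖b‖)
  have hn' := h n
  rw [RCLike.norm_nsmul ℝ, nsmul_eq_mul, ← le_div_iff₀ (norm_pos_iff.mpr hb)] at hn'
  linarith

namespace Matrix

variable {R : Type*}

theorem affine_mul [Semiring R] (a b c d : R) :
    !![a, b; 0, 1] * !![c, d; 0, 1] = !![a * c, a * d + b; 0, 1] := by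
  simp

theorem affine_pow [CommRing R] (a b : R) (n : ℕ) :
    !![a, b; 0, 1] ^ n = !![a ^ n, (∑ i ∈ Finset.range n, a ^ i) * b; 0, 1] := by
  induction n with
  | zero => simp [one_fin_two]
  | succ n ih => rw [pow_succ', ih, affine_mul, geom_sum_succ, pow_succ']; ring_nf

theorem mul_apply_zero_zero_of_apply_one_zero [Semiring R] {M N : Matrix (Fin 2) (Fin 2) R}
    (hN : N 1 0 = 0) : (M * N) 0 0 = M 0 0 * N 0 0 := by
  simp [mul_apply, Fin.sum_univ_two, hN]

end Matrix

theorem apply_one_zero_of_mem_AffC {M : Matrix (Fin 2) (Fin 2) ℂ} (hM : M ∈ AffC) :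
    M 1 0 = 0 := by
  obtain ⟨a, b, -, rfl⟩ := hM
  rfl

structure IsCompactAffSubgroup (H : Set (Matrix (Fin 2) (Fin 2) ℂ)) : Prop where
  subset : H ⊆ AffC
  one_mem : 1 ∈ H
  mul_mem : ∀ M ∈ H, ∀ N ∈ H, M * N ∈ H
  exists_inv : ∀ M ∈ H, ∃ N ∈ H, M * N = 1 ∧ N * M = 1
  isCompact : IsCompact H

theorem isCompactAffSubgroup_circleK : IsCompactAffSubgroup circleK where
  subset := by
    rintro _ ⟨u, hu, rfl⟩
    exact ⟨u, 0, norm_ne_zero_iff.mp (hu ▸ one_ne_zero), rfl⟩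
  one_mem := ⟨1, norm_one, Matrix.one_fin_two⟩
  mul_mem := by
    rintro _ ⟨u, hu, rfl⟩ _ ⟨v, hv, rfl⟩
    exact ⟨u * v, by rw [norm_mul, hu, hv, one_mul], by rw [Matrix.affine_mul]; simp⟩
  exists_inv := by
    rintro _ ⟨u, hu, rfl⟩
    have hu0 : u ≠ 0 := norm_ne_zero_iff.mp (hu ▸ one_ne_zero)
    refine ⟨!![u⁻¹, 0; 0, 1], ⟨u⁻¹, by rw [norm_inv, hu, inv_one], rfl⟩, ?_, ?_⟩ <;>
      simp [Matrix.one_fin_two, hu0]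
  isCompact := by
    have hK : circleK = (fun u : ℂ => !![u, 0; 0, 1]) '' Metric.sphere 0 1 := by
      ext M
      simp [circleK, eq_comm]
    rw [hK]
    exact (isCompact_sphere 0 1).image (by fun_prop)

namespace IsCompactAffSubgroup

variable {H : Set (Matrix (Fin 2) (Fin 2) ℂ)}

theorem pow_mem (hH : IsCompactAffSubgroup H) {M : Matrix (Fin 2) (Fin 2) ℂ} (hM : M ∈ H) :
    ∀ n : ℕ, M ^ n ∈ H
  | 0 => by rw [pow_zero]; exact hH.one_mem
  | n + 1 => by rw [pow_succ]; exact hH.mul_mem _ (hH.pow_mem hM n) _ hM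

theorem exists_bound (hH : IsCompactAffSubgroup H) (i j : Fin 2) :
    ∃ C, ∀ M ∈ H, ‖M i j‖ ≤ C :=
  hH.isCompact.exists_bound_of_continuousOn (by fun_prop)

theorem mul_apply_zero_zero (hH : IsCompactAffSubgroup H) (M : Matrix (Fin 2) (Fin 2) ℂ)
    {N : Matrix (Fin 2) (Fin 2) ℂ} (hN : N ∈ H) : (M * N) 0 0 = M 0 0 * N 0 0 :=
  Matrix.mul_apply_zero_zero_of_apply_one_zero (apply_one_zero_of_mem_AffC (hH.subset hN))

theorem norm_apply_zero_zero_le_one (hH : IsCompactAffSubgroup H)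
    {M : Matrix (Fin 2) (Fin 2) ℂ} (hM : M ∈ H) : ‖M 0 0‖ ≤ 1 := by
  obtain ⟨C, hC⟩ := hH.exists_bound 0 0
  obtain ⟨a, b, -, rfl⟩ := hH.subset hM
  refine norm_le_one_of_forall_norm_pow_le (C := C) fun n => ?_
  simpa [Matrix.affine_pow] using hC _ (hH.pow_mem hM n)

theorem norm_apply_zero_zero_eq_one (hH : IsCompactAffSubgroup H)
    {M : Matrix (Fin 2) (Fin 2) ℂ} (hM : M ∈ H) : ‖M 0 0‖ = 1 := by
  obtain ⟨N, hN, hMN, -⟩ := hH.exists_inv M hM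
  have hprod : ‖M 0 0‖ * ‖N 0 0‖ = 1 := by
    rw [← norm_mul, ← hH.mul_apply_zero_zero M hN, hMN, Matrix.one_apply_eq, norm_one]
  nlinarith [hH.norm_apply_zero_zero_le_one hM, hH.norm_apply_zero_zero_le_one hN,
    norm_nonneg (M 0 0)]

theorem eq_one_of_apply_zero_zero_eq_one (hH : IsCompactAffSubgroup H)
    {M : Matrix (Fin 2) (Fin 2) ℂ} (hM : M ∈ H) (h : M 0 0 = 1) : M = 1 := by
  obtain ⟨C, hC⟩ := hH.exists_bound 0 1
  obtain ⟨a, b, -, rfl⟩ := hH.subset hM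
  obtain rfl : a = 1 := h
  have hb : b = 0 := eq_zero_of_forall_norm_nsmul_le (C := C) fun n => by
    simpa [Matrix.affine_pow] using hC _ (hH.pow_mem hM n)
  rw [hb, Matrix.one_fin_two]

theorem eq_of_apply_zero_zero_eq (hH : IsCompactAffSubgroup H)
    {M N : Matrix (Fin 2) (Fin 2) ℂ} (hM : M ∈ H) (hN : N ∈ H) (h : M 0 0 = N 0 0) :
    M = N := by
  obtain ⟨N', hN', hNN', hN'N⟩ := hH.exists_inv N hN
  have hMN' : M * N' = 1 := hH.eq_one_of_apply_zero_zero_eq_one (hH.mul_mem M hM N' hN') <| by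
    rw [hH.mul_apply_zero_zero M hN', h, ← hH.mul_apply_zero_zero N hN', hNN',
      Matrix.one_apply_eq]
  calc M = M * N' * N := by rw [mul_assoc, hN'N, mul_one]
    _ = N := by rw [hMN', one_mul]

theorem mul_comm (hH : IsCompactAffSubgroup H) {M N : Matrix (Fin 2) (Fin 2) ℂ}
    (hM : M ∈ H) (hN : N ∈ H) : M * N = N * M :=
  hH.eq_of_apply_zero_zero_eq (hH.mul_mem M hM N hN) (hH.mul_mem N hN M hM) <| by
    rw [hH.mul_apply_zero_zero M hN, hH.mul_apply_zero_zero N hM, _root_.mul_comm]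

theorem exists_fixedPoint (hH : IsCompactAffSubgroup H) :
    ∃ z : ℂ, ∀ M ∈ H, M 0 0 * z + M 0 1 = z := by
  by_cases htriv : ∀ M ∈ H, M 0 0 = 1
  · refine ⟨0, fun M hM => ?_⟩
    simp [hH.eq_one_of_apply_zero_zero_eq_one hM (htriv M hM)]
  push Not at htriv
  obtain ⟨M₀, hM₀, ha₀⟩ := htriv
  refine ⟨M₀ 0 1 / (1 - M₀ 0 0), fun M hM => ?_⟩
  have hcomm := congrFun (congrFun (hH.mul_comm hM hM₀) 0) 1
  obtain ⟨a, b, -, rfl⟩ := hH.subset hM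
  obtain ⟨c, d, -, rfl⟩ := hH.subset hM₀
  have hc : 1 - c ≠ 0 := sub_ne_zero.mpr (Ne.symm ha₀)
  simp only [Matrix.affine_mul, Matrix.of_apply, Matrix.cons_val', Matrix.cons_val_zero,
    Matrix.cons_val_one, Matrix.empty_val', Matrix.cons_val_fin_one] at hcomm ⊢
  field_simp
  linear_combination hcomm

end IsCompactAffSubgroup

theorem translate_mul_mul_translate_inv_mem_circleK {a b z : ℂ} (ha : ‖a‖ = 1)
    (hz : a * z + b = z) :
    !![1, -z; 0, 1] * !![a, b; 0, 1] * (!![1, -z; 0, 1])⁻¹ ∈ circleK := by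
  have hinv : (!![1, -z; 0, 1])⁻¹ = !![1, z; 0, 1] :=
    Matrix.inv_eq_right_inv (by simp [Matrix.one_fin_two])
  refine ⟨a, ha, ?_⟩
  rw [hinv, Matrix.affine_mul, Matrix.affine_mul]
  simp only [one_mul, mul_one]
  congr
  linear_combination hz

theorem IsCompactAffSubgroup.exists_conj_subset_circleK {H : Set (Matrix (Fin 2) (Fin 2) ℂ)}
    (hH : IsCompactAffSubgroup H) : ∃ g ∈ AffC, ∀ M ∈ H, g * M * g⁻¹ ∈ circleK := by
  obtain ⟨z, hz⟩ := hH.exists_fixedPoint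
  refine ⟨!![1, -z; 0, 1], ⟨1, -z, one_ne_zero, rfl⟩, fun M hM => ?_⟩
  have hfix := hz M hM
  obtain ⟨a, b, -, rfl⟩ := hH.subset hM
  exact translate_mul_mul_translate_inv_mem_circleK (hH.norm_apply_zero_zero_eq_one hM) hfix

/-- `circleK` is a compact subgroup of `Aff(ℂ)`, and every compact subgroup of
`Aff(ℂ)` is conjugate (by an element of `Aff(ℂ)`) to a subgroup of `circleK`;
thus `circleK ≅ S¹` is a maximal compact subgroup of `Aff(ℂ)`. -/
theorem stmt2 :
    (circleK ⊆ AffC ∧ (1 : Matrix (Fin 2) (Fin 2) ℂ) ∈ circleK ∧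
      (∀ M ∈ circleK, ∀ N ∈ circleK, M * N ∈ circleK) ∧
      (∀ M ∈ circleK, ∃ N ∈ circleK, M * N = 1 ∧ N * M = 1) ∧
      IsCompact circleK) ∧
    (∀ H : Set (Matrix (Fin 2) (Fin 2) ℂ), H ⊆ AffC →
      (1 : Matrix (Fin 2) (Fin 2) ℂ) ∈ H →
      (∀ M ∈ H, ∀ N ∈ H, M * N ∈ H) →
      (∀ M ∈ H, ∃ N ∈ H, M * N = 1 ∧ N * M = 1) →
      IsCompact H →
      ∃ g ∈ AffC, ∀ M ∈ H, g * M * g⁻¹ ∈ circleK) := by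
  have hK := isCompactAffSubgroup_circleK
  exact ⟨⟨hK.subset, hK.one_mem, hK.mul_mem, hK.exists_inv, hK.isCompact⟩,
    fun H hsub h1 hmul hinv hcpt =>
      (IsCompactAffSubgroup.mk hsub h1 hmul hinv hcpt).exists_conj_subset_circleK⟩
end

section
/- The coadjoint orbit of the functional F₍₀,₁₎ under Aff(ℂ) is exactly the set of functionals with nonzero second parameter: { K(g)F₍₀,₁₎ : g ∈ Aff(ℂ) } = { F₍u,v₎ : u ∈ ℂ, v ∈ ℂ, v ≠ 0 }. Explicitly, for g = [[a,b],[0,1]] with a ≠ 0 one has K(g)F₍₀,₁₎ = F₍b/a, 1/a₎, and every pair (u,v) with v ≠ 0 arises this way; thus the open set of such functionals is a single 4-dimensional coadjoint orbit, diffeomorphic to ℂ × ℂ*. -/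
/-- The element `[[a, b], [0, 1]]` of `Aff(ℂ)`. -/
def affC (a b : ℂ) : Matrix (Fin 2) (Fin 2) ℂ := !![a, b; 0, 1]

/-- The element `[[α, β], [0, 0]]` of the Lie algebra `aff(ℂ)`. -/
def affLieC (α β : ℂ) : Matrix (Fin 2) (Fin 2) ℂ := !![α, β; 0, 0]

/-- The real-linear functional `F₍u,v₎` on `aff(ℂ)`,
`F₍u,v₎([[α,β],[0,0]]) = Re(uα + vβ)`, evaluated on a matrix via its
`(0,0)` and `(0,1)` entries. -/
def FfunC (u v : ℂ) (M : Matrix (Fin 2) (Fin 2) ℂ) : ℝ := (u * M 0 0 + v * M 0 1).re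


/-!
Conjugating `Z = [[α, β], [0, 0]]` by `g = [[a, b], [0, 1]]` gives `g⁻¹ Z g = [[α, (α b + β) / a], [0, 0]]`,
so `K(g) F₍₀,₁₎ = F₍b/a, 1/a₎`. A functional `F₍u,v₎` determines `(u, v)` (test it on `1` and `i`),
and `(a, b) ↦ (b/a, 1/a)` maps `ℂ* × ℂ` onto `ℂ × ℂ*`, with inverse `(u, v) ↦ (1/v, u/v)`.
-/

lemma affC_mul_affC (a b c d : ℂ) : affC a b * affC c d = affC (a * c) (a * d + b) := by
  ext i j
  fin_cases i <;> fin_cases j <;> simp [affC]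

lemma affC_inv {a : ℂ} (ha : a ≠ 0) (b : ℂ) : (affC a b)⁻¹ = affC a⁻¹ (-b / a) := by
  refine Matrix.inv_eq_right_inv ?_
  rw [affC_mul_affC, mul_inv_cancel₀ ha, mul_div_cancel₀ _ ha, neg_add_cancel]
  ext i j
  fin_cases i <;> fin_cases j <;> simp [affC]

lemma affC_inv_mul_affLieC_mul_affC {a : ℂ} (ha : a ≠ 0) (b α β : ℂ) :
    (affC a b)⁻¹ * affLieC α β * affC a b = affLieC α ((α * b + β) / a) := by
  rw [affC_inv ha]
  ext i j
  fin_cases i <;> fin_cases j <;> simp [affC, affLieC, Matrix.mul_apply]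
  · field_simp
  · ring

@[simp]
lemma FfunC_affLieC (u v α β : ℂ) : FfunC u v (affLieC α β) = (u * α + v * β).re := by
  simp [FfunC, affLieC]

lemma Complex.eq_of_forall_re_mul_eq {u u' : ℂ} (h : ∀ z : ℂ, (u * z).re = (u' * z).re) :
    u = u' := by
  have h₁ := h 1
  have hI := h I
  simp only [mul_one, mul_I_re, neg_inj] at h₁ hI
  exact Complex.ext h₁ hI

lemma eq_of_forall_FfunC_affLieC_eq {u v u' v' : ℂ}
    (h : ∀ α β : ℂ, FfunC u v (affLieC α β) = FfunC u' v' (affLieC α β)) : (u, v) = (u', v') := by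
  simp only [FfunC_affLieC] at h
  refine Prod.ext (Complex.eq_of_forall_re_mul_eq fun α => ?_)
    (Complex.eq_of_forall_re_mul_eq fun β => ?_)
  · simpa using h α 0
  · simpa using h 0 β

lemma coadjoint_affC_FfunC_zero_one {a : ℂ} (ha : a ≠ 0) (b α β : ℂ) :
    FfunC 0 1 ((affC a b)⁻¹ * affLieC α β * affC a b) = FfunC (b / a) (1 / a) (affLieC α β) := by
  rw [affC_inv_mul_affLieC_mul_affC ha, FfunC_affLieC, FfunC_affLieC]
  ring_nf

lemma exists_div_one_div_iff {u v : ℂ} :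
    (∃ a b : ℂ, a ≠ 0 ∧ (b / a, 1 / a) = (u, v)) ↔ v ≠ 0 := by
  constructor
  · rintro ⟨a, b, ha, h⟩
    obtain ⟨-, rfl⟩ := Prod.ext_iff.mp h
    simpa using ha
  · intro hv
    refine ⟨1 / v, u / v, by simpa using hv, ?_⟩
    simp only [one_div_one_div, Prod.mk.injEq, and_true]
    field_simp

/-- The coadjoint orbit of `F₍₀,₁₎` under `Aff(ℂ)` is `{F₍u,v₎ : v ≠ 0}`:
`K(g)F₍₀,₁₎ = F₍b/a, 1/a₎` for `g = [[a,b],[0,1]]`, `a ≠ 0`, and the set of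
parameters `(u, v)` so obtained is exactly `{(u, v) : v ≠ 0}`, a single
4-dimensional coadjoint orbit diffeomorphic to `ℂ × ℂ*`. -/
theorem stmt10 :
    (∀ a b : ℂ, a ≠ 0 → ∀ α β : ℂ,
        FfunC 0 1 ((affC a b)⁻¹ * affLieC α β * affC a b)
          = FfunC (b / a) (1 / a) (affLieC α β)) ∧
    ({q : ℂ × ℂ | ∃ a b : ℂ, a ≠ 0 ∧ ∀ α β : ℂ,
        FfunC 0 1 ((affC a b)⁻¹ * affLieC α β * affC a b)
          = FfunC q.1 q.2 (affLieC α β)}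
      = {q : ℂ × ℂ | q.2 ≠ 0}) := by
  refine ⟨fun a b ha => coadjoint_affC_FfunC_zero_one ha b, ?_⟩
  ext ⟨u, v⟩
  rw [Set.mem_ofPred_eq, Set.mem_ofPred_eq, ← exists_div_one_div_iff]
  refine exists₂_congr fun a b => and_congr_right fun ha => ⟨fun h => ?_, fun h α β => ?_⟩
  · exact eq_of_forall_FfunC_affLieC_eq fun α β =>
      (coadjoint_affC_FfunC_zero_one ha b α β).symm.trans (h α β)
  · obtain ⟨rfl, rfl⟩ := Prod.ext_iff.mp h
    exact coadjoint_affC_FfunC_zero_one ha b α β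
end
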